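/- arXiv:1704.00478 — 3 statements merged into one kernel-verified Lean document; each statement's English description precedes it below -/
import Mathlib

section
/- For every positive integer n, the following identity of rational numbers holds: ∑_{d ∣ n} (n/d) · φ(gcd(d, n/d)) / gcd(d, n/d) = n · ∏_{p prime, p ∣ n} (1 + 1/p). (Both sides equal the Dedekind psi function ψ(n); the left-hand side is the sum of all cusp widths for Γ₀(n).) -/
/-!
Both sides are multiplicative functions of `n`, so it suffices to compare them at prime powers.
For the left-hand side this is because, for coprime `m` and `n`, the divisors of `m * n` are the
products `d₁ * d₂` of divisors of the factors, and `gcd (d₁ * d₂) (m * n / (d₁ * d₂))` splits as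
`gcd d₁ (m / d₁) * gcd d₂ (n / d₂)` into coprime factors, on which `φ` is multiplicative.
At `p ^ (k + 1)`, writing the codivisor as `e = p ^ j`, the summand is `1` for `j = 0`,
`p ^ (k + 1)` for `j = k + 1` and `p ^ j - p ^ (j - 1)` in between; these telescope to
`p ^ (k + 1) + p ^ k = ψ (p ^ (k + 1))`.
-/

open Finset ArithmeticFunction

theorem Nat.gcd_mul_mul_of_coprime_mul {a₁ b₁ a₂ b₂ : ℕ} (h : (a₁ * b₁).Coprime (a₂ * b₂)) :
    Nat.gcd (a₁ * a₂) (b₁ * b₂) = Nat.gcd a₁ b₁ * Nat.gcd a₂ b₂ := by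
  have hb : b₁.Coprime b₂ := h.coprime_mul_left.coprime_mul_left_right
  have h₁ : a₁.Coprime b₂ := h.coprime_mul_right.coprime_mul_left_right
  have h₂ : a₂.Coprime b₁ := h.coprime_mul_left.coprime_mul_right_right.symm
  rw [Nat.Coprime.gcd_mul _ hb, Nat.Coprime.gcd_mul_right_cancel a₁ h₂,
    Nat.Coprime.gcd_mul_left_cancel a₂ h₁]

theorem Nat.Coprime.sum_divisors_mul_eq_sum_product {M : Type*} [AddCommMonoid M] {m n : ℕ}
    (h : m.Coprime n) (f : ℕ → M) :
    ∑ d ∈ (m * n).divisors, f d = ∑ d ∈ m.divisors ×ˢ n.divisors, f (d.1 * d.2) := by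
  rw [Nat.divisors_mul, Finset.mul_def, sum_image h.mul_injOn_divisors]

theorem Nat.cast_totient_div_self {n : ℕ} (hn : n ≠ 0) :
    (Nat.totient n : ℚ) / n = ∏ p ∈ n.primeFactors, (1 - (p : ℚ)⁻¹) := by
  rw [Nat.totient_eq_mul_prod_factors, mul_div_cancel_left₀ _ (by exact_mod_cast hn)]

/-- The cusps of `Γ₀(d * e)` of denominator `d` are `φ (gcd d e)` in number, each of width
`e / gcd d e`; this is their total width. -/
def cuspWidthTerm (d e : ℕ) : ℚ :=
  (e : ℚ) * (Nat.totient (Nat.gcd d e) : ℚ) / ((Nat.gcd d e : ℕ) : ℚ)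

theorem cuspWidthTerm_mul {d₁ e₁ d₂ e₂ : ℕ} (h : (d₁ * e₁).Coprime (d₂ * e₂)) :
    cuspWidthTerm (d₁ * d₂) (e₁ * e₂) = cuspWidthTerm d₁ e₁ * cuspWidthTerm d₂ e₂ := by
  have hgcd : (Nat.gcd d₁ e₁).Coprime (Nat.gcd d₂ e₂) :=
    h.of_dvd (Nat.gcd_dvd_left _ _ |>.trans (dvd_mul_right _ _))
      (Nat.gcd_dvd_left _ _ |>.trans (dvd_mul_right _ _))
  rw [cuspWidthTerm, Nat.gcd_mul_mul_of_coprime_mul h, Nat.totient_mul hgcd]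
  push_cast
  rw [cuspWidthTerm, cuspWidthTerm]
  ring

theorem cuspWidthTerm_one_left (e : ℕ) : cuspWidthTerm 1 e = e := by
  simp [cuspWidthTerm]

theorem cuspWidthTerm_one_right (d : ℕ) : cuspWidthTerm d 1 = 1 := by
  simp [cuspWidthTerm]

theorem cuspWidthTerm_prime_pow {p i j : ℕ} (hp : p.Prime) (hi : i ≠ 0) (hj : j ≠ 0) :
    cuspWidthTerm (p ^ i) (p ^ j) = (p : ℚ) ^ j * (1 - (p : ℚ)⁻¹) := by
  have hp₀ : ∀ {k : ℕ}, p ^ k ≠ 0 := pow_ne_zero _ hp.ne_zero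
  rw [cuspWidthTerm, mul_div_assoc, Nat.cast_totient_div_self (Nat.gcd_ne_zero_left hp₀),
    Nat.primeFactors_gcd hp₀ hp₀, Nat.primeFactors_prime_pow hi hp,
    Nat.primeFactors_prime_pow hj hp, inter_self, prod_singleton, Nat.cast_pow]

def cuspWidthSum : ArithmeticFunction ℚ :=
  ⟨fun n => ∑ d ∈ n.divisors, cuspWidthTerm d (n / d), by simp⟩

theorem cuspWidthSum_apply (n : ℕ) :
    cuspWidthSum n = ∑ d ∈ n.divisors, cuspWidthTerm d (n / d) :=
  rfl

theorem isMultiplicative_cuspWidthSum : cuspWidthSum.IsMultiplicative := by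
  refine ⟨by simp [cuspWidthSum_apply, cuspWidthTerm_one_left], fun {m n} hmn => ?_⟩
  rw [cuspWidthSum_apply, hmn.sum_divisors_mul_eq_sum_product, cuspWidthSum_apply,
    cuspWidthSum_apply, sum_mul_sum, sum_product]
  refine sum_congr rfl fun d₁ hd₁ => sum_congr rfl fun d₂ hd₂ => ?_
  obtain ⟨hd₁, -⟩ := Nat.mem_divisors.mp hd₁
  obtain ⟨hd₂, -⟩ := Nat.mem_divisors.mp hd₂
  rw [← Nat.div_mul_div_comm hd₁ hd₂, cuspWidthTerm_mul]
  rwa [Nat.mul_div_cancel' hd₁, Nat.mul_div_cancel' hd₂]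

theorem cuspWidthSum_prime_pow_succ {p : ℕ} (hp : p.Prime) (k : ℕ) :
    cuspWidthSum (p ^ (k + 1)) = (p : ℚ) ^ (k + 1) + (p : ℚ) ^ k := by
  have hp₀ : (p : ℚ) ≠ 0 := by exact_mod_cast hp.ne_zero
  have telescoping : ∀ j ∈ range k,
      cuspWidthTerm (p ^ (k + 1 - (j + 1))) (p ^ (j + 1)) = (p : ℚ) ^ (j + 1) - (p : ℚ) ^ j := by
    intro j hj
    rw [cuspWidthTerm_prime_pow hp (by grind) j.succ_ne_zero, pow_succ, mul_sub, mul_one,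
      mul_assoc, mul_inv_cancel₀ hp₀, mul_one]
  calc cuspWidthSum (p ^ (k + 1))
      = ∑ j ∈ range (k + 2), cuspWidthTerm (p ^ (k + 1 - j)) (p ^ j) := by
        rw [cuspWidthSum_apply, ← Nat.sum_divisorsAntidiagonal cuspWidthTerm,
          Nat.sum_divisorsAntidiagonal', Nat.sum_divisors_prime_pow hp]
        refine sum_congr rfl fun j hj => ?_
        rw [Nat.pow_div (by grind) hp.pos]
    _ = ∑ j ∈ range k, ((p : ℚ) ^ (j + 1) - (p : ℚ) ^ j)
          + cuspWidthTerm (p ^ (k + 1)) 1 + cuspWidthTerm 1 (p ^ (k + 1)) := by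
        rw [sum_range_succ, sum_range_succ', ← sum_congr rfl telescoping]
        simp
    _ = (p : ℚ) ^ (k + 1) + (p : ℚ) ^ k := by
        rw [sum_range_sub, cuspWidthTerm_one_left, cuspWidthTerm_one_right]
        push_cast
        ring

def dedekindPsi : ArithmeticFunction ℚ :=
  ⟨fun n => n * ∏ p ∈ n.primeFactors, (1 + 1 / (p : ℚ)), by simp⟩

theorem dedekindPsi_apply (n : ℕ) :
    dedekindPsi n = n * ∏ p ∈ n.primeFactors, (1 + 1 / (p : ℚ)) :=
  rfl

theorem isMultiplicative_dedekindPsi : dedekindPsi.IsMultiplicative := by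
  refine ⟨by simp [dedekindPsi_apply], fun {m n} hmn => ?_⟩
  rw [dedekindPsi_apply, hmn.primeFactors_mul, prod_union hmn.disjoint_primeFactors]
  push_cast
  rw [dedekindPsi_apply, dedekindPsi_apply]
  ring

theorem dedekindPsi_prime_pow_succ {p : ℕ} (hp : p.Prime) (k : ℕ) :
    dedekindPsi (p ^ (k + 1)) = (p : ℚ) ^ (k + 1) + (p : ℚ) ^ k := by
  have hp₀ : (p : ℚ) ≠ 0 := by exact_mod_cast hp.ne_zero
  rw [dedekindPsi_apply, Nat.primeFactors_prime_pow k.succ_ne_zero hp, prod_singleton]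
  push_cast
  field_simp
  ring

theorem cuspWidthSum_eq_dedekindPsi : cuspWidthSum = dedekindPsi := by
  refine (IsMultiplicative.eq_iff_eq_on_prime_powers _ isMultiplicative_cuspWidthSum _
    isMultiplicative_dedekindPsi).mpr fun p k hp => ?_
  cases k with
  | zero => rw [pow_zero, isMultiplicative_cuspWidthSum.map_one,
      isMultiplicative_dedekindPsi.map_one]
  | succ k => rw [cuspWidthSum_prime_pow_succ hp, dedekindPsi_prime_pow_succ hp]

theorem sum_cusp_widths_eq_dedekind_psi_general (n : ℕ) :
    ∑ d ∈ n.divisors,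
      ((n / d : ℕ) : ℚ) * (Nat.totient (Nat.gcd d (n / d)) : ℚ) / ((Nat.gcd d (n / d) : ℕ) : ℚ)
      = (n : ℚ) * ∏ p ∈ n.primeFactors, (1 + 1 / (p : ℚ)) :=
  DFunLike.congr_fun cuspWidthSum_eq_dedekindPsi n

/-- For every positive integer `n`,
`∑_{d ∣ n} (n/d) · φ(gcd(d, n/d)) / gcd(d, n/d) = n · ∏_{p prime, p ∣ n} (1 + 1/p)`,
both sides being the Dedekind psi function `ψ(n)`. -/
theorem sum_cusp_widths_eq_dedekind_psi (n : ℕ) (hn : 0 < n) :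
    ∑ d ∈ n.divisors,
      ((n / d : ℕ) : ℚ) * (Nat.totient (Nat.gcd d (n / d)) : ℚ) / ((Nat.gcd d (n / d) : ℕ) : ℚ)
      = (n : ℚ) * ∏ p ∈ n.primeFactors, (1 + 1 / (p : ℚ)) :=
  sum_cusp_widths_eq_dedekind_psi_general n
end

section
/- For every positive integer n, the index of the congruence subgroup Γ₀(n) in SL(2,ℤ) equals the Dedekind psi function ψ(n) = n · ∏_{p prime, p ∣ n} (1 + 1/p). -/
/-!
`SL(2, ℤ)` acts on pairs in `(ℤ/n)²` through reduction mod `n`. The orbit of `(1, 0)` is the set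
of unimodular pairs (every such pair lifts to a coprime pair of integers, i.e. to the first column
of a matrix in `SL(2, ℤ)`), and its stabiliser is `Γ₁(n)`, the kernel of `Γ₀(n) → (ℤ/n)ˣ`.
Hence `[SL(2, ℤ) : Γ₀(n)] · φ(n)` is the number of unimodular pairs mod `n`. By the Chinese
remainder theorem this number is multiplicative, and in the local ring `ℤ/p^k` a pair is unimodular
iff one of its entries is a unit, which gives `n² ∏_{p ∣ n} (1 - p⁻²)`. Dividing by
`φ(n) = n ∏_{p ∣ n} (1 - p⁻¹)` leaves `ψ(n)`.
-/

open Matrix CongruenceSubgroup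

open scoped MatrixGroups

theorem Nat.exists_modEq_coprime {n m c : ℕ} (hm : m ≠ 0) (hc : c.Coprime (n.gcd m)) :
    ∃ k, k ≡ c [MOD n] ∧ k.Coprime m := by
  have : NeZero m := ⟨hm⟩
  -- `c` is a unit mod `gcd n m`; lift it to a unit mod `m` and glue with `c` mod `n`.
  obtain ⟨u, hu⟩ := ZMod.unitsMap_surjective (Nat.gcd_dvd_right n m)
    ((ZMod.isUnit_iff_coprime c _).mpr hc).unit
  have hcu : c ≡ (u : ZMod m).val [MOD n.gcd m] := by
    rw [← ZMod.natCast_eq_natCast_iff]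
    have := congrArg Units.val hu
    rw [ZMod.unitsMap_val, IsUnit.unit_spec, ZMod.cast_eq_val] at this
    exact this.symm
  obtain ⟨k, hkn, hkm⟩ := Nat.chineseRemainder' hcu
  exact ⟨k, hkn, (Nat.ModEq.gcd_eq hkm).trans (ZMod.val_coe_unit_coprime u)⟩

theorem ZMod.exists_isCoprime_intCast_eq {n : ℕ} {a c : ZMod n} (h : IsCoprime a c) :
    ∃ a' c' : ℤ, IsCoprime a' c' ∧ (a' : ZMod n) = a ∧ (c' : ZMod n) = c := by
  rcases Nat.eq_zero_or_pos n with rfl | hn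
  · exact ⟨a, c, h, Int.cast_id, Int.cast_id⟩
  have : NeZero n := ⟨hn.ne'⟩
  -- a lift of `a` that is nonzero even when `a = 0`
  set m := a.val + n
  have ha : (m : ZMod n) = a := by simp [m]
  have hc : c.val.Coprime (n.gcd m) := by
    have := h.map (ZMod.castHom (Nat.gcd_dvd_left n m) (ZMod (n.gcd m)))
    rw [← ha, map_natCast, (ZMod.natCast_eq_zero_iff _ _).mpr (Nat.gcd_dvd_right n m),
      isCoprime_zero_left, ZMod.castHom_apply, ZMod.cast_eq_val] at this
    exact (ZMod.isUnit_iff_coprime _ _).mp this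
  obtain ⟨k, hkn, hkm⟩ := Nat.exists_modEq_coprime (by omega) hc
  refine ⟨m, k, Nat.isCoprime_iff_coprime.mpr hkm.symm, by exact_mod_cast ha, ?_⟩
  rw [Int.cast_natCast, (ZMod.natCast_eq_natCast_iff _ _ _).mpr hkn, ZMod.natCast_zmod_val]

def unimodularPairs (R : Type*) [CommRing R] : Set (Fin 2 → R) :=
  {v | IsCoprime (v 0) (v 1)}

section UnimodularPairs

variable {R S : Type*} [CommRing R] [CommRing S]

@[simp]
lemma mem_unimodularPairs {v : Fin 2 → R} : v ∈ unimodularPairs R ↔ IsCoprime (v 0) (v 1) :=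
  Iff.rfl

lemma Prod.isCoprime_iff {a b : R × S} :
    IsCoprime a b ↔ IsCoprime a.1 b.1 ∧ IsCoprime a.2 b.2 := by
  refine ⟨fun h => ⟨h.map (RingHom.fst R S), h.map (RingHom.snd R S)⟩, ?_⟩
  rintro ⟨⟨u, v, huv⟩, ⟨u', v', huv'⟩⟩
  exact ⟨(u, u'), (v, v'), Prod.ext huv huv'⟩

lemma IsLocalRing.isCoprime_iff [IsLocalRing R] {a b : R} :
    IsCoprime a b ↔ IsUnit a ∨ IsUnit b := by
  refine ⟨fun ⟨u, v, h⟩ => ?_, ?_⟩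
  · exact (IsLocalRing.isUnit_or_isUnit_of_isUnit_add (h ▸ isUnit_one)).imp
      isUnit_of_mul_isUnit_right isUnit_of_mul_isUnit_right
  · rintro (⟨u, rfl⟩ | ⟨u, rfl⟩)
    · exact ⟨↑u⁻¹, 0, by simp⟩
    · exact ⟨0, ↑u⁻¹, by simp⟩

lemma card_nonunits [Finite R] : Nat.card {x : R // ¬IsUnit x} = Nat.card R - Nat.card Rˣ := by
  rw [Nat.card_congr (Equiv.ofInjective _ Units.val_injective), Nat.card_coe_set_eq,
    ← Set.ncard_compl]
  rfl

lemma card_unimodularPairs_congr (e : R ≃+* S) :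
    Nat.card (unimodularPairs R) = Nat.card (unimodularPairs S) :=
  Nat.card_congr <| (Equiv.piCongrRight fun _ => e.toEquiv).subtypeEquiv fun _ =>
    ⟨fun h => h.map e.toRingHom, fun h => by simpa using h.map e.symm.toRingHom⟩

lemma card_unimodularPairs_prod :
    Nat.card (unimodularPairs (R × S)) =
      Nat.card (unimodularPairs R) * Nat.card (unimodularPairs S) := by
  rw [← Nat.card_prod]
  exact Nat.card_congr <| ((Equiv.arrowProdEquivProdArrow _ _ _).subtypeEquiv
    fun _ => Prod.isCoprime_iff).trans Equiv.subtypeProdEquivProd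

lemma card_unimodularPairs_of_isLocalRing [IsLocalRing R] [Finite R] :
    Nat.card (unimodularPairs R) = Nat.card R ^ 2 - (Nat.card R - Nat.card Rˣ) ^ 2 := by
  have hcompl : Nat.card ↥(unimodularPairs R)ᶜ = Nat.card {x : R // ¬IsUnit x} ^ 2 :=
    calc Nat.card ↥(unimodularPairs R)ᶜ = Nat.card (Fin 2 → {x : R // ¬IsUnit x}) :=
          Nat.card_congr ((Equiv.subtypeEquivRight fun v => by
            simp [IsLocalRing.isCoprime_iff, Fin.forall_fin_two]).trans Equiv.subtypePiEquivPi)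
      _ = _ := by simp [Nat.card_fun]
  have htotal := Set.ncard_add_ncard_compl (unimodularPairs R)
  simp only [Nat.card_fun, Nat.card_eq_fintype_card (α := Fin 2), Fintype.card_fin] at htotal
  rw [← card_nonunits, ← hcompl, Nat.card_coe_set_eq, Nat.card_coe_set_eq]
  omega

end UnimodularPairs

theorem ZMod.isLocalRing_prime_pow {p : ℕ} [Fact p.Prime] (k : ℕ) :
    IsLocalRing (ZMod (p ^ (k + 1))) :=
  have : Nontrivial (ZMod (p ^ (k + 1))) :=
    ZMod.nontrivial_iff.mpr (by simp [(Fact.out : p.Prime).ne_one])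
  .of_surjective' (PadicInt.toZModPow (k + 1)) fun x => ⟨x.val, by simp⟩

lemma card_unimodularPairs_zmod_prime_pow {p : ℕ} (hp : p.Prime) (k : ℕ) :
    (Nat.card (unimodularPairs (ZMod (p ^ (k + 1)))) : ℚ) =
      ((p ^ (k + 1) : ℕ) : ℚ) ^ 2 * (1 - 1 / (p : ℚ) ^ 2) := by
  have := Fact.mk hp
  have := ZMod.isLocalRing_prime_pow (p := p) k
  have hnonunits : p ^ (k + 1) - (p ^ (k + 1)).totient = p ^ k := by
    rw [Nat.totient_prime_pow_succ hp, pow_succ, ← Nat.mul_sub, Nat.sub_sub_self hp.one_le,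
      mul_one]
  rw [card_unimodularPairs_of_isLocalRing, Nat.card_zmod, Nat.card_eq_fintype_card,
    ZMod.card_units_eq_totient, hnonunits,
    Nat.cast_sub (Nat.pow_le_pow_left (Nat.pow_le_pow_right hp.pos (Nat.le_add_right k 1)) 2)]
  have : (p : ℚ) ≠ 0 := by exact_mod_cast hp.ne_zero
  field_simp
  push_cast
  ring

lemma card_unimodularPairs_zmod {n : ℕ} (hn : n ≠ 0) :
    (Nat.card (unimodularPairs (ZMod n)) : ℚ) =
      n ^ 2 * ∏ p ∈ n.primeFactors, (1 - 1 / (p : ℚ) ^ 2) := by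
  induction n using Nat.recOnPosPrimePosCoprime with
  | prime_pow p k hp hk =>
    obtain ⟨k, rfl⟩ := Nat.exists_eq_succ_of_ne_zero hk.ne'
    rw [card_unimodularPairs_zmod_prime_pow hp, Nat.primeFactors_prime_pow k.succ_ne_zero hp,
      Finset.prod_singleton]
  | zero => exact absurd rfl hn
  | one =>
    simp only [Nat.cast_one, one_pow, Nat.primeFactors_one, Finset.prod_empty, mul_one,
      Nat.cast_eq_one, Nat.card_eq_one_iff_exists]
    exact ⟨⟨0, 0, 0, Subsingleton.elim _ _⟩, fun _ => Subsingleton.elim _ _⟩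
  | coprime a b _ _ hab iha ihb =>
    rw [card_unimodularPairs_congr (ZMod.chineseRemainder hab), card_unimodularPairs_prod,
      Nat.cast_mul, iha (by aesop), ihb (by aesop), Nat.Coprime.primeFactors_mul hab,
      Finset.prod_union hab.disjoint_primeFactors]
    push_cast
    ring

namespace CongruenceSubgroup

abbrev reductionMulAction (n : ℕ) : MulAction SL(2, ℤ) (Fin 2 → ZMod n) :=
  MulAction.compHom _ (SpecialLinearGroup.map (Int.castRingHom (ZMod n)))

attribute [local instance] reductionMulAction

lemma smul_vecCons_one_zero {n : ℕ} (A : SL(2, ℤ)) :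
    A • (![1, 0] : Fin 2 → ZMod n) = ![(A 0 0 : ZMod n), (A 1 0 : ZMod n)] := by
  change (A.1.map (Int.cast : ℤ → ZMod n)) *ᵥ ![1, 0] = _
  ext i
  fin_cases i <;> simp [mulVec, vecHead]

lemma orbit_vecCons_one_zero (n : ℕ) :
    MulAction.orbit SL(2, ℤ) (![1, 0] : Fin 2 → ZMod n) = unimodularPairs (ZMod n) := by
  ext v
  constructor
  · rintro ⟨A, rfl⟩
    simpa [smul_vecCons_one_zero] using (A.isCoprime_col 0).map (Int.castRingHom (ZMod n))
  · intro hv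
    obtain ⟨a, c, hac, ha, hc⟩ := ZMod.exists_isCoprime_intCast_eq hv
    obtain ⟨A, hA0, hA1⟩ := hac.exists_SL2_col 0
    refine ⟨A, ?_⟩
    ext i
    fin_cases i <;> simp [smul_vecCons_one_zero, hA0, hA1, ha, hc]

lemma stabilizer_vecCons_one_zero (n : ℕ) :
    MulAction.stabilizer SL(2, ℤ) (![1, 0] : Fin 2 → ZMod n) = Gamma1 n := by
  ext A
  have hdet : (A 0 0 * A 1 1 - A 0 1 * A 1 0 : ZMod n) = 1 := by
    exact_mod_cast congrArg (Int.cast : ℤ → ZMod n) (A.det_coe ▸ (det_fin_two A.1)).symm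
  rw [MulAction.mem_stabilizer_iff, smul_vecCons_one_zero, Gamma1_mem]
  simp only [funext_iff, Fin.forall_fin_two, cons_val_zero, cons_val_one]
  constructor
  · rintro ⟨ha, hc⟩
    exact ⟨ha, by simpa [ha, hc] using hdet, hc⟩
  · exact fun h => ⟨h.1, h.2.2⟩

lemma Gamma1_subgroupOf_Gamma0 (n : ℕ) : (Gamma1 n).subgroupOf (Gamma0 n) = Gamma1' n := by
  ext A
  rw [Subgroup.mem_subgroupOf, Gamma1_mem, Gamma1_to_Gamma0_mem]

lemma Gamma0Map_toHomUnits_surjective (n : ℕ) :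
    Function.Surjective (Gamma0Map n).toHomUnits := by
  intro u
  have hu : IsUnit (((u : ZMod n).cast : ℤ) : ZMod n) := by
    rw [ZMod.intCast_zmod_cast]
    exact u.isUnit
  obtain ⟨A, hA1, hA2⟩ := ((ZMod.coe_int_isUnit_iff_isCoprime _ n).mp hu).exists_SL2_row 1
  exact ⟨⟨A, by simp [hA1]⟩, Units.ext (by simp [Gamma0Map, hA2])⟩

lemma relIndex_Gamma1_Gamma0 (n : ℕ) :
    (Gamma1 n).relIndex (Gamma0 n) = Nat.card (ZMod n)ˣ := by
  rw [Subgroup.relIndex, Gamma1_subgroupOf_Gamma0, Gamma1', ← MonoidHom.ker_toHomUnits,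
    Subgroup.index_ker, MonoidHom.range_eq_top.mpr (Gamma0Map_toHomUnits_surjective n),
    Subgroup.card_top]

lemma index_Gamma0_mul_card_units (n : ℕ) :
    (Gamma0 n).index * Nat.card (ZMod n)ˣ = Nat.card (unimodularPairs (ZMod n)) := by
  rw [mul_comm, ← relIndex_Gamma1_Gamma0, Subgroup.relIndex_mul_index (Gamma1_in_Gamma0 n),
    ← stabilizer_vecCons_one_zero, MulAction.index_stabilizer, orbit_vecCons_one_zero,
    Nat.card_coe_set_eq]

end CongruenceSubgroup

/-- The index of the congruence subgroup `Γ₀(n)` in `SL(2, ℤ)` equals the Dedekind psi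
function `ψ(n) = n · ∏_{p prime, p ∣ n} (1 + 1/p)`. -/
theorem Gamma0_index_eq_dedekind_psi (n : ℕ) (hn : 0 < n) :
    ((Gamma0 n).index : ℚ) = (n : ℚ) * ∏ p ∈ n.primeFactors, (1 + 1 / (p : ℚ)) := by
  have : NeZero n := ⟨hn.ne'⟩
  have htotient : (Nat.card (ZMod n)ˣ : ℚ) = n * ∏ p ∈ n.primeFactors, (1 - 1 / (p : ℚ)) := by
    simpa [Nat.card_eq_fintype_card, ZMod.card_units_eq_totient] using
      Nat.totient_eq_mul_prod_factors n
  have hunits : (Nat.card (ZMod n)ˣ : ℚ) ≠ 0 := by exact_mod_cast Nat.card_pos.ne'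
  have hsquares : ∏ p ∈ n.primeFactors, (1 - 1 / (p : ℚ) ^ 2) =
      (∏ p ∈ n.primeFactors, (1 - 1 / (p : ℚ))) * ∏ p ∈ n.primeFactors, (1 + 1 / (p : ℚ)) := by
    rw [← Finset.prod_mul_distrib]
    exact Finset.prod_congr rfl fun p _ => by ring
  rw [← mul_left_inj' hunits, ← Nat.cast_mul, index_Gamma0_mul_card_units,
    card_unimodularPairs_zmod hn.ne', hsquares, htotient]
  ring
end

section
/- Let G be a group, let V be a vector space over ℚ, and let n be a positive integer. Let φ : V → G be a homomorphism from the additive group of V to G (so φ(u+v) = φ(u)φ(v) for all u, v ∈ V; in particular the elements φ(u) pairwise commute). Let T : V → V be a ℚ-linear map with Tⁿ = id, and let g ∈ G satisfy g φ(u) g⁻¹ = φ(T u) for all u ∈ V. Then for every u ∈ V the element φ(u)·g is conjugate in G, by an element of the image of φ, to φ((1/n)·∑_{i=0}^{n−1} Tⁱ u)·g; explicitly, x = φ((1/n)·∑_{i=1}^{n−1} i·Tⁱ u) satisfies x·(φ(u) g)·x⁻¹ = φ((1/n)·∑_{i=0}^{n−1} Tⁱ u)·g. (This is the computational content of the paper's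 Lemma that, for an automorphism g of order n of a vertex operator algebra preserving a Cartan subalgebra 𝔥 of V₁, the automorphism e^{u₀}·g is conjugate to exp(((1/n)∑_{i=0}^{n−1} gⁱu)₀)·g under an inner automorphism; note u ↦ (1/n)∑_{i=0}^{n−1} Tⁱu is the projection onto the fixed-point subspace of T.) -/
/-!
Conjugating `φ u * g` by `φ w` gives `φ (w + u - T w) * g`, so it suffices to solve
`(1 - T) w = P / n - u` with `P = ∑_{i<n} Tⁱ u`. For `S = ∑_{i<n} i • Tⁱ u`, summation by parts
gives `S - T S = ∑_{i<n} Tⁱ⁺¹ u - n • Tⁿ u`, which is `P - n • u` once `Tⁿ u = u`; take `w = S / n`.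
-/

open Finset

section ConjugationByImage

variable {G V : Type*} [Group G] [AddGroup V] {φ : V → G}

theorem map_sub_of_map_add (hφ : ∀ u v : V, φ (u + v) = φ u * φ v) (a b : V) :
    φ (a - b) = φ a * (φ b)⁻¹ :=
  eq_mul_inv_of_mul_eq (by rw [← hφ, sub_add_cancel])

theorem conj_mul_eq_of_conj_map_eq (hφ : ∀ u v : V, φ (u + v) = φ u * φ v) {T : V → V} {g : G}
    (hg : ∀ u : V, g * φ u * g⁻¹ = φ (T u)) (w u : V) :
    φ w * (φ u * g) * (φ w)⁻¹ = φ (w + u - T w) * g := by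
  rw [map_sub_of_map_add hφ, hφ, ← hg]
  group

end ConjugationByImage

section WeightedOrbitSum

variable {R M : Type*} [Ring R] [AddCommGroup M] [Module R M]

theorem sum_range_natCast_smul_pow_apply_sub_map (T : Module.End R M) (u : M) (n : ℕ) :
    ∑ i ∈ range n, (i : R) • (T ^ i) u - T (∑ i ∈ range n, (i : R) • (T ^ i) u) =
      ∑ i ∈ range n, (T ^ (i + 1)) u - (n : R) • (T ^ n) u := by
  induction n with
  | zero => simp
  | succ n ih =>
    simp only [sum_range_succ, map_add, map_smul, ← Module.End.mul_apply, ← pow_succ']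
    rw [Nat.cast_succ, add_smul, one_smul, add_sub_add_comm, ih]
    abel

theorem sum_range_pow_succ_apply_of_pow_apply_eq (T : Module.End R M) {n : ℕ} {u : M}
    (hu : (T ^ n) u = u) :
    ∑ i ∈ range n, (T ^ (i + 1)) u = ∑ i ∈ range n, (T ^ i) u := by
  have h := (sum_range_succ (fun i ↦ (T ^ i) u) n).symm.trans (sum_range_succ' _ n)
  rwa [hu, pow_zero, Module.End.one_apply, add_left_inj, eq_comm] at h

end WeightedOrbitSum

theorem add_sub_map_eq_inv_smul_sum_range_pow_apply {K M : Type*} [DivisionRing K]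
    [AddCommGroup M] [Module K M] (T : Module.End K M) {n : ℕ} (hn : (n : K) ≠ 0) {u : M}
    (hu : (T ^ n) u = u) :
    let w := (n : K)⁻¹ • ∑ i ∈ range n, (i : K) • (T ^ i) u
    w + u - T w = (n : K)⁻¹ • ∑ i ∈ range n, (T ^ i) u := by
  intro w
  have key := sum_range_natCast_smul_pow_apply_sub_map T u n
  rw [sum_range_pow_succ_apply_of_pow_apply_eq T hu, hu] at key
  rw [map_smul, add_sub_right_comm, ← smul_sub, key, smul_sub, smul_smul, inv_mul_cancel₀ hn,
    one_smul, sub_add_cancel]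

/-- Let `φ : V → G` be a homomorphism from the additive group of a `ℚ`-vector space `V` to a
group `G`, let `T : V → V` be a `ℚ`-linear map with `Tⁿ = id`, and let `g ∈ G` satisfy
`g φ(u) g⁻¹ = φ(T u)`. Then `x = φ((1/n)·∑_{i=1}^{n−1} i·Tⁱ u)` conjugates `φ(u)·g` to
`φ((1/n)·∑_{i=0}^{n−1} Tⁱ u)·g`. -/
theorem inner_conj_to_fixed_point_projection
    (G : Type*) [Group G] (V : Type*) [AddCommGroup V] [Module ℚ V]
    (n : ℕ) (hn : 0 < n)
    (φ : V → G) (hφ : ∀ u v : V, φ (u + v) = φ u * φ v)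
    (T : V →ₗ[ℚ] V) (hT : T ^ n = LinearMap.id)
    (g : G) (hg : ∀ u : V, g * φ u * g⁻¹ = φ (T u))
    (u : V) :
    φ ((n : ℚ)⁻¹ • ∑ i ∈ Finset.Ico 1 n, (i : ℚ) • (T ^ i) u) * (φ u * g) *
        (φ ((n : ℚ)⁻¹ • ∑ i ∈ Finset.Ico 1 n, (i : ℚ) • (T ^ i) u))⁻¹
      = φ ((n : ℚ)⁻¹ • ∑ i ∈ Finset.range n, (T ^ i) u) * g := by
  have hIco : ∑ i ∈ Ico 1 n, (i : ℚ) • (T ^ i) u = ∑ i ∈ range n, (i : ℚ) • (T ^ i) u := by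
    rw [sum_range_eq_add_Ico _ hn, Nat.cast_zero, zero_smul, zero_add]
  have hu : (T ^ n) u = u := by rw [hT, LinearMap.id_apply]
  rw [hIco, conj_mul_eq_of_conj_map_eq hφ hg,
    add_sub_map_eq_inv_smul_sum_range_pow_apply T (Nat.cast_ne_zero.mpr hn.ne') hu]
end
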